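/- Suppose S = ∞ and there exist z̃ > 1, C₁ > 0 and γ₁ ∈ [0,1] such that m(z) ≤ C₁ z^{γ₁} for all z > z̃. Then there exist constants C̃₁, C̃₂ > 0 such that f(z) ≥ −C̃₁ + C̃₂ z^{1−γ₁/2} for all z ≥ 0. -/

import Mathlib

open MeasureTheory Set Filter Topology

/-! Concavity and positivity of `m` on `(0, ∞)` give `m r ≥ (r / z) m z` for `r ≤ z`, so
`√(2 / m r) = O(r^{-1/2})` near `0`: the integrand is integrable, so the Bochner integral is not the junk value `0`. Beyond `z̃` the
growth bound gives `√(2 / m r) ≥ √(2 / C₁) r^{-γ₁/2}`, whose integral over `(z̃, z)` is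
`√(2 / C₁) (z^{1-γ₁/2} - z̃^{1-γ₁/2}) / (1 - γ₁/2)`; for `z ≤ z̃` the bound holds since `f ≥ 0`. -/

theorem ConcaveOn.div_mul_le_of_nonneg_Ioi {f : ℝ → ℝ} (hf : ConcaveOn ℝ (Ioi 0) f)
    (hf₀ : ∀ x, 0 < x → 0 ≤ f x) {r a : ℝ} (hr : 0 < r) (hra : r ≤ a) :
    r / a * f a ≤ f r := by
  -- Concavity along the chord from `ε` to `a`, then `ε → 0⁺`.
  have hchord : ∀ ε ∈ Ioo 0 r, (r - ε) / (a - ε) * f a ≤ f r := by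
    rintro ε ⟨hε, hεr⟩
    have hεa : 0 < a - ε := by linarith
    have hcomb := hf.2 (mem_Ioi.2 hε) (mem_Ioi.2 (hr.trans_le hra))
      (div_nonneg (sub_nonneg.2 hra) hεa.le) (div_nonneg (sub_nonneg.2 hεr.le) hεa.le)
      (by field_simp; ring)
    have hpoint : ((a - r) / (a - ε)) • ε + ((r - ε) / (a - ε)) • a = r := by
      simp only [smul_eq_mul]; field_simp; ring
    rw [hpoint, smul_eq_mul, smul_eq_mul] at hcomb
    have := mul_nonneg (div_nonneg (sub_nonneg.2 hra) hεa.le) (hf₀ ε hε)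
    linarith
  have hlim : Tendsto (fun ε => (r - ε) / (a - ε) * f a) (𝓝[>] 0) (𝓝 (r / a * f a)) := by
    have ha : a - 0 ≠ 0 := by rw [sub_zero]; exact (hr.trans_le hra).ne'
    have hcont : ContinuousAt (fun ε => (r - ε) / (a - ε) * f a) 0 :=
      ((continuousAt_const.sub continuousAt_id).div
        (continuousAt_const.sub continuousAt_id) ha).mul continuousAt_const
    simpa using hcont.tendsto.mono_left nhdsWithin_le_nhds
  exact le_of_tendsto hlim (eventually_of_mem (Ioo_mem_nhdsGT hr) hchord)

theorem ContDiffOn.concaveOn_of_deriv2_nonpos {D : Set ℝ} (hD : Convex ℝ D) (hD' : IsOpen D)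
    {f : ℝ → ℝ} (hf : ContDiffOn ℝ 2 f D) (hf'' : ∀ x ∈ D, deriv (deriv f) x ≤ 0) :
    ConcaveOn ℝ D f :=
  concaveOn_of_deriv2_nonpos' hD (hf.differentiableOn two_ne_zero)
    ((hf.deriv_of_isOpen hD' one_add_one_eq_two.le).differentiableOn one_ne_zero)
    (fun x hx => by simpa using hf'' x hx)

theorem integrableOn_sqrt_div_of_concaveOn {f : ℝ → ℝ} (hf : ConcaveOn ℝ (Ioi 0) f)
    (hf₀ : ∀ x, 0 < x → 0 < f x) {c : ℝ} (hc : 0 ≤ c) {z : ℝ} (hz : 0 < z) :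
    IntegrableOn (fun r => √(c / f r)) (Ioo 0 z) := by
  have hdom : IntegrableOn (fun r : ℝ => √(c * z / f z) * r ^ (-(1 / 2 : ℝ))) (Ioo 0 z) :=
    ((intervalIntegral.intervalIntegrable_rpow' (by norm_num)).1.mono_set
      Ioo_subset_Ioc_self).const_mul _
  have hmeas : AEStronglyMeasurable (fun r => √(c / f r)) (volume.restrict (Ioo 0 z)) :=
    (continuousOn_const.div ((hf.continuousOn isOpen_Ioi).mono Ioo_subset_Ioi_self)
      (fun r hr => (hf₀ r hr.1).ne')).sqrt.aestronglyMeasurable measurableSet_Ioo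
  refine hdom.mono' hmeas ((ae_restrict_iff' measurableSet_Ioo).2 (ae_of_all _ ?_))
  rintro r ⟨hr, hrz⟩
  have hlin := hf.div_mul_le_of_nonneg_Ioi (fun x hx => (hf₀ x hx).le) hr hrz.le
  have hfz := hf₀ z hz
  have hbound : c / f r ≤ c * z / f z * r⁻¹ := by
    calc c / f r ≤ c / (r / z * f z) := div_le_div_of_nonneg_left hc (by positivity) hlin
      _ = c * z / f z * r⁻¹ := by field_simp
  rw [Real.norm_of_nonneg (Real.sqrt_nonneg _), Real.rpow_neg hr.le, ← Real.sqrt_eq_rpow,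
    ← Real.sqrt_inv, ← Real.sqrt_mul (by positivity)]
  exact Real.sqrt_le_sqrt hbound

theorem sqrt_div_mul_rpow_neg_le_sqrt_div {c C γ r y : ℝ} (hc : 0 ≤ c) (hr : 0 < r) (hy : 0 < y)
    (hyC : y ≤ C * r ^ γ) : √(c / C) * r ^ (-(γ / 2)) ≤ √(c / y) := by
  have hrγ : r ^ (-(γ / 2)) = √((r ^ γ)⁻¹) := by
    rw [Real.sqrt_eq_rpow, ← Real.rpow_neg hr.le, ← Real.rpow_mul hr.le]; ring_nf
  rw [hrγ, ← Real.sqrt_mul' _ (inv_nonneg.2 (Real.rpow_nonneg hr.le γ)), ← div_eq_mul_inv,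
    div_div]
  exact Real.sqrt_le_sqrt (div_le_div_of_nonneg_left hc hy hyC)

theorem setIntegral_Ioo_rpow {a b s : ℝ} (hab : a ≤ b) (hs : -1 < s) :
    ∫ r in Ioo a b, r ^ s = (b ^ (s + 1) - a ^ (s + 1)) / (s + 1) := by
  rw [← integral_Ioc_eq_integral_Ioo, ← intervalIntegral.integral_of_le hab,
    integral_rpow (Or.inl hs)]

theorem f_lower_bound_power_general
    (m : ℝ → ℝ)
    (hm_c2 : ContDiffOn ℝ 2 m (Ioi 0))
    (hm_pos : ∀ z : ℝ, 0 < z → 0 < m z)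
    (hm_conc : ∀ z : ℝ, 0 < z → deriv (deriv m) z ≤ 0)
    (ztilde C₁ γ₁ : ℝ) (hzt : 1 < ztilde) (hC₁ : 0 < C₁)
    (hγ₁ : γ₁ ∈ Icc (0 : ℝ) 1)
    (hup : ∀ z : ℝ, ztilde < z → m z ≤ C₁ * z ^ γ₁) :
    ∃ C₁' C₂' : ℝ, 0 < C₁' ∧ 0 < C₂' ∧ ∀ z : ℝ, 0 ≤ z →
      -C₁' + C₂' * z ^ (1 - γ₁ / 2) ≤ ∫ r in Ioo (0 : ℝ) z, Real.sqrt (2 / m r) := by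
  obtain ⟨-, hγ₁_le⟩ := hγ₁
  have hp : 0 < 1 - γ₁ / 2 := by linarith
  set p := 1 - γ₁ / 2
  set K := √(2 / C₁) / p
  have hK : 0 < K := by positivity
  have hzt₀ : 0 < ztilde := by linarith
  refine ⟨K * ztilde ^ p, K, by positivity, hK, fun z hz => ?_⟩
  rcases le_or_gt z ztilde with hle | hlt
  · have hzp := mul_le_mul_of_nonneg_left (Real.rpow_le_rpow hz hle hp.le) hK.le
    have : 0 ≤ ∫ r in Ioo 0 z, √(2 / m r) :=
      setIntegral_nonneg measurableSet_Ioo fun r _ => Real.sqrt_nonneg _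
    linarith
  have hconc := hm_c2.concaveOn_of_deriv2_nonpos (convex_Ioi 0) isOpen_Ioi hm_conc
  have hint := integrableOn_sqrt_div_of_concaveOn hconc hm_pos zero_le_two (hzt₀.trans hlt)
  have hpow_int : IntegrableOn (fun r => √(2 / C₁) * r ^ (-(γ₁ / 2))) (Ioo ztilde z) :=
    ((intervalIntegral.intervalIntegrable_rpow' (by linarith)).1.mono_set
      Ioo_subset_Ioc_self).const_mul _
  calc -(K * ztilde ^ p) + K * z ^ p = ∫ r in Ioo ztilde z, √(2 / C₁) * r ^ (-(γ₁ / 2)) := by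
        rw [integral_const_mul, setIntegral_Ioo_rpow hlt.le (by linarith),
          show -(γ₁ / 2) + 1 = p by ring]
        ring
    _ ≤ ∫ r in Ioo ztilde z, √(2 / m r) :=
        setIntegral_mono_on hpow_int (hint.mono_set (Ioo_subset_Ioo_left hzt₀.le))
          measurableSet_Ioo fun r hr => sqrt_div_mul_rpow_neg_le_sqrt_div zero_le_two
            (hzt₀.trans hr.1) (hm_pos r (hzt₀.trans hr.1)) (hup r hr.1)
    _ ≤ ∫ r in Ioo 0 z, √(2 / m r) :=
        setIntegral_mono_set hint (ae_of_all _ fun r => Real.sqrt_nonneg (2 / m r))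
          (Ioo_subset_Ioo_left hzt₀.le).eventuallyLE

/-- For `S = ∞` and `m` satisfying (M) on `(0,∞)`, if there exist `z̃ > 1`,
`C₁ > 0` and `γ₁ ∈ [0,1]` with `m(z) ≤ C₁ z^{γ₁}` for all `z > z̃`, then there exist
`C̃₁, C̃₂ > 0` such that `f(z) ≥ −C̃₁ + C̃₂ z^{1−γ₁/2}` for all `z ≥ 0`, where
`f(z) := ∫₀^z √(2/m(r)) dr`. -/
theorem f_lower_bound_power
    (m : ℝ → ℝ)
    (hm_c2 : ContDiffOn ℝ 2 m (Ioi 0))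
    (hm_pos : ∀ z : ℝ, 0 < z → 0 < m z)
    (hm_conc : ∀ z : ℝ, 0 < z → deriv (deriv m) z ≤ 0)
    (hm0 : Tendsto m (𝓝[>] (0 : ℝ)) (𝓝 0))
    (ztilde C₁ γ₁ : ℝ) (hzt : 1 < ztilde) (hC₁ : 0 < C₁)
    (hγ₁ : γ₁ ∈ Icc (0 : ℝ) 1)
    (hup : ∀ z : ℝ, ztilde < z → m z ≤ C₁ * z ^ γ₁) :
    ∃ C₁' C₂' : ℝ, 0 < C₁' ∧ 0 < C₂' ∧ ∀ z : ℝ, 0 ≤ z →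
      -C₁' + C₂' * z ^ (1 - γ₁ / 2) ≤ ∫ r in Ioo (0 : ℝ) z, Real.sqrt (2 / m r) :=
  f_lower_bound_power_general m hm_c2 hm_pos hm_conc ztilde C₁ γ₁ hzt hC₁ hγ₁ hup
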